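/- Let G be a finite abelian group with maol(G) = 2. Then G is isomorphic to Z/mZ for some m ∈ {3, 4, 6}. -/

import Mathlib

/-- `maol G` is the maximum length of an orbit of the natural action of `Aut(G)` on `G`. -/
noncomputable def maol (G : Type*) [Group G] : ℕ :=
  ⨆ g : G, Nat.card (MulAction.orbit (MulAut G) g)

/-!
By the structure theorem, `G ≃ ∏ₖ ℤ/nₖ` with all `nₖ > 1`. If `nᵢ` and `nⱼ` (`i ≠ j`) have a
common factor, there are nonzero homomorphisms `f : ℤ/nᵢ → ℤ/nⱼ` and `f' : ℤ/nⱼ → ℤ/nᵢ`, and the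
transvections `x ↦ x + f(xᵢ) eⱼ` and `x ↦ x + f'(xⱼ) eᵢ` move `eᵢ + eⱼ` in different coordinates,
which gives an orbit of length `3`. Hence the `nₖ` are pairwise coprime and `G ≃ ℤ/m`. Every unit
of `ℤ/m` lies in the orbit of `1`, so `φ(m) ≤ 2`; an orbit of length `2` avoids the identity, so
`m > 2`. The only such `m` are `3`, `4` and `6`.
-/

open MulAction

theorem Nat.dvd_twelve_of_totient_le_two {m : ℕ} (hm : m ≠ 0) (h : m.totient ≤ 2) : m ∣ 12 := by
  rw [Nat.dvd_iff_prime_pow_dvd_dvd]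
  rintro p (_ | k) hp hpk
  · simp
  have hφ : p ^ k * (p - 1) ≤ 2 := by
    rw [← Nat.totient_prime_pow_succ hp]
    exact (Nat.le_of_dvd (Nat.totient_pos.2 (Nat.pos_of_ne_zero hm))
      (Nat.totient_dvd_of_dvd hpk)).trans h
  have hle : p ^ (k + 1) ≤ 4 := by
    have := hp.two_le
    calc p ^ (k + 1) = p ^ k * p := pow_succ p k
      _ ≤ p ^ k * (2 * (p - 1)) := Nat.mul_le_mul_left _ (by omega)
      _ ≤ 4 := by nlinarith
  have hpos : 0 < p ^ (k + 1) := pow_pos hp.pos _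
  generalize p ^ (k + 1) = q at hle hpos
  interval_cases q <;> norm_num

theorem Nat.eq_three_or_four_or_six_of_totient_le_two {m : ℕ} (hm : 2 < m)
    (h : m.totient ≤ 2) : m = 3 ∨ m = 4 ∨ m = 6 := by
  have hdvd := Nat.dvd_twelve_of_totient_le_two (by omega) h
  have : m ≤ 12 := Nat.le_of_dvd (by norm_num) hdvd
  interval_cases m <;> revert h hdvd <;> decide

theorem ZMod.exists_addMonoidHom_apply_one_ne_zero {a b : ℕ} [NeZero b] (h : ¬ a.Coprime b) :
    ∃ f : ZMod a →+ ZMod b, f 1 ≠ 0 := by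
  set g := a.gcd b
  have hb : 0 < b := NeZero.pos b
  have hg : 1 < g := by
    have := Nat.gcd_pos_of_pos_right a hb
    unfold Nat.Coprime at h
    omega
  have hkill : (a : ℤ) • ((b / g : ℕ) : ZMod b) = 0 := by
    have : a * (b / g) = a / g * b := by
      conv_lhs => rw [← Nat.div_mul_cancel (Nat.gcd_dvd_left a b)]
      rw [mul_assoc, Nat.mul_div_cancel' (Nat.gcd_dvd_right a b)]
    rw [natCast_zsmul, nsmul_eq_mul, ← Nat.cast_mul, this, Nat.cast_mul, ZMod.natCast_self,
      mul_zero]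
  refine ⟨ZMod.lift a ⟨zmultiplesHom _ ((b / g : ℕ) : ZMod b), hkill⟩, ?_⟩
  rw [← Int.cast_one, ZMod.lift_coe]
  simp only [zmultiplesHom_apply, one_zsmul, ne_eq, ZMod.natCast_eq_zero_iff]
  intro hdvd
  have hpos : 0 < b / g := Nat.div_pos (Nat.gcd_le_right (m := a) hb) (by omega)
  exact absurd (Nat.le_of_dvd hpos hdvd) (not_le.2 (Nat.div_lt_self hb hg))

def AddEquiv.addSelfOfSqEqZero {A : Type*} [AddCommGroup A] (F : A →+ A)
    (hF : ∀ x, F (F x) = 0) : A ≃+ A where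
  toFun x := x + F x
  invFun x := x - F x
  left_inv x := by simp [hF x]
  right_inv x := by simp [hF x]
  map_add' x y := by simp only [map_add]; abel

section Transvection

variable {ι : Type*} [DecidableEq ι] {β : ι → Type*} [∀ k, AddCommGroup (β k)] {i j : ι}

def Pi.transvection (hij : i ≠ j) (f : β i →+ β j) : (∀ k, β k) ≃+ (∀ k, β k) :=
  AddEquiv.addSelfOfSqEqZero ((AddMonoidHom.single β j).comp (f.comp (Pi.evalAddMonoidHom β i)))
    fun x => by simp [hij]

theorem Pi.transvection_apply (hij : i ≠ j) (f : β i →+ β j) (x : ∀ k, β k) :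
    Pi.transvection hij f x = x + Pi.single j (f (x i)) :=
  rfl

end Transvection

section Maol

variable {G H : Type*} [Group G] [Group H]

theorem card_orbit_le_maol [Finite G] (g : G) : Nat.card (orbit (MulAut G) g) ≤ maol G :=
  le_ciSup (f := fun g : G => Nat.card (orbit (MulAut G) g)) (Set.finite_range _).bddAbove g

theorem card_orbit_mulEquiv (e : G ≃* H) (g : G) :
    Nat.card (orbit (MulAut H) (e g)) = Nat.card (orbit (MulAut G) g) := by
  have himage : orbit (MulAut H) (e g) = e '' orbit (MulAut G) g := by
    ext h
    constructor
    · rintro ⟨σ, rfl⟩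
      exact ⟨(e.trans (σ.trans e.symm)) g, ⟨e.trans (σ.trans e.symm), rfl⟩, by simp⟩
    · rintro ⟨_, ⟨σ, rfl⟩, rfl⟩
      exact ⟨e.symm.trans (σ.trans e), by simp⟩
  rw [himage, Nat.card_image_of_injective e.injective]

theorem maol_congr (e : G ≃* H) : maol G = maol H :=
  Equiv.iSup_congr e.toEquiv fun g => card_orbit_mulEquiv e g

theorem maol_lt_card [Finite G] (h : 1 < maol G) : maol G < Nat.card G := by
  obtain ⟨g, hg⟩ : ∃ g : G, Nat.card (orbit (MulAut G) g) = maol G := exists_eq_ciSup_of_finite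
  have hone : (1 : G) ∉ orbit (MulAut G) g := by
    intro h1
    have horbit_one : orbit (MulAut G) (1 : G) = {1} := by
      ext x
      simp [mem_orbit_iff, eq_comm]
    rw [← orbit_eq_iff.2 h1, horbit_one] at hg
    simp only [Nat.card_unique] at hg
    omega
  rw [← hg, Nat.card_coe_set_eq]
  exact Set.ncard_lt_card fun huniv => hone (huniv ▸ Set.mem_univ _)

theorem ofAdd_mem_orbit {A : Type*} [AddGroup A] (σ : A ≃+ A) (a : A) :
    Multiplicative.ofAdd (σ a) ∈ orbit (MulAut (Multiplicative A)) (Multiplicative.ofAdd a) :=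
  ⟨AddEquiv.toMultiplicative σ, rfl⟩

theorem two_lt_maol_multiplicative {A : Type*} [AddGroup A] [Finite A] {a : A} {σ τ : A ≃+ A}
    (hσ : a ≠ σ a) (hτ : a ≠ τ a) (hστ : σ a ≠ τ a) : 2 < maol (Multiplicative A) := by
  refine lt_of_lt_of_le ?_ (card_orbit_le_maol (Multiplicative.ofAdd a))
  rw [Nat.card_coe_set_eq, Set.two_lt_ncard]
  exact ⟨_, mem_orbit_self _, _, ofAdd_mem_orbit σ a, _, ofAdd_mem_orbit τ a, hσ, hτ, hστ⟩

theorem totient_le_maol (m : ℕ) [NeZero m] : m.totient ≤ maol (Multiplicative (ZMod m)) := by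
  let f (u : (ZMod m)ˣ) :
      orbit (MulAut (Multiplicative (ZMod m))) (Multiplicative.ofAdd (1 : ZMod m)) :=
    ⟨Multiplicative.ofAdd (u : ZMod m), by simpa using ofAdd_mem_orbit (AddAut.mulRight u) 1⟩
  have hf : Function.Injective f := fun u v huv => Units.ext (congrArg Subtype.val huv)
  rw [← ZMod.card_units_eq_totient, ← Nat.card_eq_fintype_card]
  exact (Nat.card_le_card_of_injective f hf).trans (card_orbit_le_maol _)

theorem two_lt_maol_of_not_coprime {ι : Type*} [Finite ι] [DecidableEq ι] (n : ι → ℕ)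
    [∀ k, NeZero (n k)] {i j : ι} (hij : i ≠ j) (h : ¬ (n i).Coprime (n j)) :
    2 < maol (Multiplicative (∀ k, ZMod (n k))) := by
  obtain ⟨f, hf⟩ := ZMod.exists_addMonoidHom_apply_one_ne_zero h
  obtain ⟨f', hf'⟩ := ZMod.exists_addMonoidHom_apply_one_ne_zero fun h' => h h'.symm
  set a : ∀ k, ZMod (n k) := Pi.single i 1 + Pi.single j 1
  have hai : a i = 1 := by simp [a, hij]
  have haj : a j = 1 := by simp [a, hij]
  refine two_lt_maol_multiplicative (a := a) (σ := Pi.transvection hij f)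
    (τ := Pi.transvection hij.symm f') ?_ ?_ ?_ <;>
    simp only [Pi.transvection_apply, hai, haj, ne_eq, left_ne_add, Pi.single_eq_zero_iff]
  · exact hf
  · exact hf'
  · exact fun heq => hf (by simpa [hij] using congrFun heq j)

end Maol

theorem stmt_9 (G : Type*) [CommGroup G] [Finite G] (h : maol G = 2) :
    ∃ m ∈ ({3, 4, 6} : Set ℕ), Nonempty (G ≃* Multiplicative (ZMod m)) := by
  classical
  obtain ⟨ι, _, n, hn, ⟨e⟩⟩ := CommGroup.equiv_prod_multiplicative_zmod_of_finite G
  have : ∀ k, NeZero (n k) := fun k => NeZero.of_pos (zero_lt_one.trans (hn k))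
  let eA : G ≃* Multiplicative (∀ k, ZMod (n k)) := e.trans (MulEquiv.piMultiplicative _).symm
  have hcop : Pairwise (Function.onFun Nat.Coprime n) := fun i j hij => by
    by_contra hc
    have := two_lt_maol_of_not_coprime n hij hc
    rw [← maol_congr eA] at this
    omega
  let eZ : G ≃* Multiplicative (ZMod (∏ k, n k)) :=
    eA.trans (ZMod.prodEquivPi n hcop).symm.toAddEquiv.toMultiplicative
  have : NeZero (∏ k, n k) := ⟨Finset.prod_ne_zero_iff.2 fun k _ => NeZero.ne (n k)⟩
  refine ⟨∏ k, n k, Nat.eq_three_or_four_or_six_of_totient_le_two ?_ ?_, ⟨eZ⟩⟩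
  · have := maol_lt_card (h ▸ one_lt_two)
    rwa [h, Nat.card_congr eZ.toEquiv, Nat.card_eq_fintype_card, Fintype.card_multiplicative,
      ZMod.card] at this
  · exact h ▸ maol_congr eZ ▸ totient_le_maol _
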